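/- arXiv:1407.5335 — 2 statements merged into one kernel-verified Lean document; each statement's English description precedes it below -/
import Mathlib

section
/- Let V be a complex vector space equipped with a symmetric bilinear form B, let k ∈ ℂ, and let δ, α, γ ∈ V satisfy B(δ,δ) = 0, B(α,α) = B(δ,α)², and B(γ,γ) = B(δ,γ)². Set h := k·δ − B(α,δ)·γ − B(γ,δ)·α. If B(h,δ) = 2 and B(h,α) = 0, then: (i) B(δ,α)·B(δ,γ) = −1 (in particular B(δ,α) ≠ 0 and B(δ,γ) ≠ 0); (ii) B(α,γ) = k + 1; (iii) B(h,γ) = 0; and (iv) B(h,h) = 2k. -/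
/-!
Write `a = B(δ,α)`, `c = B(δ,γ)`, `x = B(α,γ)`. Expanding `h` by bilinearity and using the three
isotropy-type relations, `B(h,δ) = -2ac`, while `B(h,α)` and `B(h,γ)` are `a` resp. `c` times the
common factor `k - x - ac`. So `B(h,δ) = 2` forces `ac = -1`; then `a ≠ 0` and `B(h,α) = 0` kill the
factor, giving `x = k + 1` and `B(h,γ) = 0`; finally `B(h,h) = k B(h,δ) - a B(h,γ) - c B(h,α) = 2k`.
-/

namespace Wakimoto

variable {R M : Type*} [CommRing R] [AddCommGroup M] [Module R M]
  (B : M →ₗ[R] M →ₗ[R] R) (k : R) (δ α γ : M)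

/-- The vector `h` whose field `β(z)` is the Cartan current `h(z)` of the embedding. -/
def cartan : M := k • δ - B α δ • γ - B γ δ • α

lemma cartan_apply (v : M) :
    B (cartan B k δ α γ) v = k * B δ v - B α δ * B γ v - B γ δ * B α v := by
  simp [cartan]

variable {B}

lemma cartan_apply_delta (hB : ∀ v w, B v w = B w v) (hδδ : B δ δ = 0) :
    B (cartan B k δ α γ) δ = -2 * (B δ α * B δ γ) := by
  rw [cartan_apply, hδδ, hB α δ, hB γ δ]
  ring

lemma cartan_apply_alpha (hB : ∀ v w, B v w = B w v) (hαα : B α α = B δ α ^ 2) :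
    B (cartan B k δ α γ) α = B δ α * (k - B α γ - B δ α * B δ γ) := by
  rw [cartan_apply, hαα, hB α δ, hB γ δ, hB γ α]
  ring

lemma cartan_apply_gamma (hB : ∀ v w, B v w = B w v) (hγγ : B γ γ = B δ γ ^ 2) :
    B (cartan B k δ α γ) γ = B δ γ * (k - B α γ - B δ α * B δ γ) := by
  rw [cartan_apply, hγγ, hB α δ, hB γ δ]
  ring

lemma cartan_apply_self (hB : ∀ v w, B v w = B w v) :
    B (cartan B k δ α γ) (cartan B k δ α γ) =
      k * B (cartan B k δ α γ) δ - B δ α * B (cartan B k δ α γ) γ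
        - B δ γ * B (cartan B k δ α γ) α := by
  conv_lhs => rw [cartan_apply]
  rw [hB δ (cartan B k δ α γ), hB γ (cartan B k δ α γ), hB α (cartan B k δ α γ), hB α δ,
    hB γ δ]

end Wakimoto

open Wakimoto in
/-- The algebraic core of the classification of embeddings of
`sl₂`-hat of level `k` in a lattice vertex algebra (Theorem 2.2 of the paper).
`B` is a symmetric bilinear form on a complex vector space `V`. -/
theorem wakimoto_gram_classification
    (V : Type*) [AddCommGroup V] [Module ℂ V]
    (B : V →ₗ[ℂ] V →ₗ[ℂ] ℂ) (hB : ∀ v w : V, B v w = B w v)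
    (k : ℂ) (δ α γ : V)
    (hδδ : B δ δ = 0)
    (hαα : B α α = (B δ α) ^ 2)
    (hγγ : B γ γ = (B δ γ) ^ 2)
    (h : V) (hdef : h = k • δ - (B α δ) • γ - (B γ δ) • α)
    (hhδ : B h δ = 2) (hhα : B h α = 0) :
    B δ α * B δ γ = -1 ∧ B δ α ≠ 0 ∧ B δ γ ≠ 0 ∧
      B α γ = k + 1 ∧ B h γ = 0 ∧ B h h = 2 * k := by
  replace hdef : h = cartan B k δ α γ := hdef
  subst hdef
  have hac : B δ α * B δ γ = -1 := by
    rw [cartan_apply_delta k δ α γ hB hδδ] at hhδ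
    linear_combination (-1 / 2 : ℂ) * hhδ
  have ha : B δ α ≠ 0 := left_ne_zero_of_mul (by rw [hac]; norm_num)
  have hc : B δ γ ≠ 0 := right_ne_zero_of_mul (by rw [hac]; norm_num)
  have hfactor : k - B α γ - B δ α * B δ γ = 0 := by
    rw [cartan_apply_alpha k δ α γ hB hαα] at hhα
    exact (mul_eq_zero.mp hhα).resolve_left ha
  have hhγ : B (cartan B k δ α γ) γ = 0 := by
    rw [cartan_apply_gamma k δ α γ hB hγγ, hfactor, mul_zero]
  refine ⟨hac, ha, hc, by linear_combination -hfactor - hac, hhγ, ?_⟩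
  rw [cartan_apply_self k δ α γ hB, hhδ, hhα, hhγ]
  ring
end

section
/- Fix c ∈ ℂ and let B be the commutative ℂ-algebra ℂ[x, y, t; q, q⁻¹] of polynomials in three countable families of variables x = (x₁, x₂, …), y = (y₁, y₂, …), t = (t₁, t₂, …) tensored with Laurent polynomials in q. Define ℂ-linear operators on B: for n ≥ 1, α_{(n)} := ∂_{x_n} + c∂_{y_n} + ∂_{t_n}, α_{(−n)} := multiplication by n·x_n, and α_{(0)} := q∂_q; γ_{(n)} := c∂_{x_n} + ∂_{y_n} − ∂_{t_n}, γ_{(−n)} := multiplication by n·y_n, and γ_{(0)} := −q∂_q; δ_{(n)} := ∂_{x_n} − ∂_{y_n}, δ_{(−n)} := multiplication by n·t_n, and δ_{(0)} := 0. Then for all a, b ∈ {α, γ, δ} and all m, n ∈ ℤ, the commutator satisfies [a_{(m)}, b_{(n)}] = m·δ_{m,−n}·(a|b)·id_B, where the pairing is (α|α) = (γ|γ) = 1, (α|γ) = (γ|α) = c, (δ|α) = (α|δ) = 1, (δ|γ) = (γ|δ) = −1, and (δ|δ) = 0. -/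
open MvPolynomial TensorProduct

noncomputable section

/-- The index set of the variables: `(0, n) ↦ x_{n+1}`, `(1, n) ↦ y_{n+1}`,
`(2, n) ↦ t_{n+1}` (so the second component `n : ℕ` encodes the subscript `n+1`). -/
abbrev BosVar : Type := Fin 3 × ℕ

/-- The bosonic Fock space `B = ℂ[x, y, t; q, q⁻¹]`: polynomials in the three
countable families `x`, `y`, `t` tensored with Laurent polynomials in `q`. -/
abbrev BosFock : Type := MvPolynomial BosVar ℂ ⊗[ℂ] LaurentPolynomial ℂ

/-- A linear operator on the polynomial factor, extended to `B`. -/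
def onPoly (f : MvPolynomial BosVar ℂ →ₗ[ℂ] MvPolynomial BosVar ℂ) :
    Module.End ℂ BosFock :=
  LinearMap.rTensor (LaurentPolynomial ℂ) f

/-- A linear operator on the Laurent polynomial factor, extended to `B`. -/
def onLaurent (g : LaurentPolynomial ℂ →ₗ[ℂ] LaurentPolynomial ℂ) :
    Module.End ℂ BosFock :=
  LinearMap.lTensor (MvPolynomial BosVar ℂ) g

/-- The Euler operator `q∂_q` on Laurent polynomials: `qⁿ ↦ n·qⁿ`. -/
def eulerOp : LaurentPolynomial ℂ →ₗ[ℂ] LaurentPolynomial ℂ :=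
  (AddMonoidAlgebra.coeffLinearEquiv ℂ).symm.toLinearMap ∘ₗ
    (Finsupp.lsum ℂ fun n : ℤ => (n : ℂ) • Finsupp.lsingle n) ∘ₗ
    (AddMonoidAlgebra.coeffLinearEquiv ℂ).toLinearMap

/-- The modes `α_{(m)}`: `α_{(n)} = ∂_{x_n} + c∂_{y_n} + ∂_{t_n}`,
`α_{(−n)} = n·x_n·`, `α_{(0)} = q∂_q` (for `n > 0`). -/
def alphaMode (c : ℂ) : ℤ → Module.End ℂ BosFock
  | Int.ofNat 0 => onLaurent eulerOp
  | Int.ofNat (n + 1) => onPoly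
      ((pderiv (0, n)).toLinearMap + c • (pderiv (1, n)).toLinearMap
        + (pderiv (2, n)).toLinearMap)
  | Int.negSucc n => onPoly (LinearMap.mulLeft ℂ (((n + 1 : ℕ) : ℂ) • X (0, n)))

/-- The modes `γ_{(m)}`: `γ_{(n)} = c∂_{x_n} + ∂_{y_n} − ∂_{t_n}`,
`γ_{(−n)} = n·y_n·`, `γ_{(0)} = −q∂_q` (for `n > 0`). -/
def gammaMode (c : ℂ) : ℤ → Module.End ℂ BosFock
  | Int.ofNat 0 => -onLaurent eulerOp
  | Int.ofNat (n + 1) => onPoly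
      (c • (pderiv (0, n)).toLinearMap + (pderiv (1, n)).toLinearMap
        - (pderiv (2, n)).toLinearMap)
  | Int.negSucc n => onPoly (LinearMap.mulLeft ℂ (((n + 1 : ℕ) : ℂ) • X (1, n)))

/-- The modes `δ_{(m)}`: `δ_{(n)} = ∂_{x_n} − ∂_{y_n}`, `δ_{(−n)} = n·t_n·`,
`δ_{(0)} = 0` (for `n > 0`). -/
def deltaMode : ℤ → Module.End ℂ BosFock
  | Int.ofNat 0 => 0
  | Int.ofNat (n + 1) => onPoly
      ((pderiv (0, n)).toLinearMap - (pderiv (1, n)).toLinearMap)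
  | Int.negSucc n => onPoly (LinearMap.mulLeft ℂ (((n + 1 : ℕ) : ℂ) • X (2, n)))

/-- The three families of modes, indexed by `0 ↦ α`, `1 ↦ γ`, `2 ↦ δ`. -/
def bosMode (c : ℂ) : Fin 3 → ℤ → Module.End ℂ BosFock :=
  ![alphaMode c, gammaMode c, deltaMode]

/-- The pairing `(·|·)` on `{α, γ, δ}`: `(α|α) = (γ|γ) = 1`, `(α|γ) = c`,
`(δ|α) = 1`, `(δ|γ) = −1`, `(δ|δ) = 0`. -/
def bosPair (c : ℂ) : Fin 3 → Fin 3 → ℂ :=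
  fun i j => !![1, c, 1; c, 1, -1; 1, -1, 0] i j

/-!
Attach to `α, γ, δ` the variable families `x, y, t`, and write `u_n` for the variable of the
family attached to `u`. Every mode splits as
`u_{(m)} = δ_{m,0} (δ|u) q∂_q + P_u(m)`, where `P_u(m)` acts on the polynomial factor only:
`P_u(n) = ∑_w (u|w) ∂_{w_n}` and `P_u(-n) = n u_n` for `n > 0`, and `P_u(0) = 0`.
Operators on different tensor factors commute, so only `[P_u(m), P_v(n)]` survives. Derivations
that are constant on the variables commute, multiplications commute, and
`[∂_{w_n}, v_l] = δ_{w,v} δ_{n,l}` gives `[P_u(n), P_v(-n)] = n (u|v)`; the case `m < 0 < n`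
follows by antisymmetry of the bracket and symmetry of the pairing.
-/

section TensorProduct

variable {R M N : Type*} [CommSemiring R] [AddCommGroup M] [Module R M] [AddCommGroup N]
  [Module R N]

theorem LinearMap.lie_rTensor (f g : Module.End R M) :
    ⁅f.rTensor N, g.rTensor N⁆ = LinearMap.rTensor N ⁅f, g⁆ := by
  rw [Ring.lie_def, Ring.lie_def, rTensor_sub, rTensor_mul, rTensor_mul]

theorem LinearMap.commute_lTensor_rTensor (g : Module.End R N) (f : Module.End R M) :
    Commute (g.lTensor M) (f.rTensor N) := by
  rw [Commute, SemiconjBy, Module.End.mul_eq_comp, Module.End.mul_eq_comp,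
    rTensor_comp_lTensor, lTensor_comp_rTensor]

end TensorProduct

theorem Derivation.lie_coe_mulLeft {R A : Type*} [CommSemiring R] [CommRing A] [Algebra R A]
    (D : Derivation R A A) (a : A) :
    ⁅(D : Module.End R A), LinearMap.mulLeft R a⁆ = LinearMap.mulLeft R (D a) := by
  ext b
  simp only [Ring.lie_def, LinearMap.sub_apply, Module.End.mul_apply, LinearMap.mulLeft_apply,
    Derivation.coeFn_coe, D.leibniz, smul_eq_mul]
  ring

theorem MvPolynomial.lie_derivation_eq_zero_of_X_eq_C {R σ : Type*} [CommRing R]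
    {D₁ D₂ : Derivation R (MvPolynomial σ R) (MvPolynomial σ R)}
    (h₁ : ∀ i, ∃ r, D₁ (X i) = C r) (h₂ : ∀ i, ∃ r, D₂ (X i) = C r) : ⁅D₁, D₂⁆ = 0 := by
  refine derivation_ext fun i => ?_
  obtain ⟨r₁, hr₁⟩ := h₁ i
  obtain ⟨r₂, hr₂⟩ := h₂ i
  rw [Derivation.commutator_apply, hr₁, hr₂, derivation_C, derivation_C, sub_zero,
    Derivation.zero_apply]

def derivMode (a : Fin 3 → ℂ) (n : ℕ) :
    Derivation ℂ (MvPolynomial BosVar ℂ) (MvPolynomial BosVar ℂ) :=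
  ∑ w, a w • pderiv (w, n)

theorem derivMode_X (a : Fin 3 → ℂ) (n : ℕ) (v : Fin 3) (l : ℕ) :
    derivMode a n (X (v, l)) = C (if n = l then a v else 0) := by
  rw [derivMode, ← Derivation.coeFnAddMonoidHom_apply, map_sum, Finset.sum_apply]
  simp [pderiv_X, Pi.single_apply, eq_comm (a := l), ite_and, smul_eq_C_mul, apply_ite C]

theorem lie_derivMode (a b : Fin 3 → ℂ) (n l : ℕ) : ⁅derivMode a n, derivMode b l⁆ = 0 :=
  lie_derivation_eq_zero_of_X_eq_C (fun _ => ⟨_, derivMode_X ..⟩) (fun _ => ⟨_, derivMode_X ..⟩)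

theorem lie_derivMode_mulLeft (a : Fin 3 → ℂ) (n : ℕ) (s : ℂ) (v : Fin 3) (l : ℕ) :
    ⁅(derivMode a n : Module.End ℂ (MvPolynomial BosVar ℂ)),
        LinearMap.mulLeft ℂ (s • (X (v, l) : MvPolynomial BosVar ℂ))⁆
      = (if n = l then s * a v else 0) • 1 := by
  rw [Derivation.lie_coe_mulLeft, Derivation.map_smul, derivMode_X, smul_eq_C_mul, ← C_mul,
    mul_ite, mul_zero]
  refine LinearMap.ext fun p => ?_
  split_ifs <;> simp [C_mul', smul_smul]

def polyMode (c : ℂ) (i : Fin 3) : ℤ → Module.End ℂ (MvPolynomial BosVar ℂ)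
  | Int.ofNat 0 => 0
  | Int.ofNat (n + 1) => derivMode (bosPair c i) n
  | Int.negSucc n => LinearMap.mulLeft ℂ (((n + 1 : ℕ) : ℂ) • X (i, n))

theorem bosMode_eq_onLaurent_add_onPoly (c : ℂ) (i : Fin 3) (m : ℤ) :
    bosMode c i m
      = (if m = 0 then bosPair c 2 i else 0) • onLaurent eulerOp + onPoly (polyMode c i m) := by
  fin_cases i <;> rcases m with (_ | n) | n <;>
    simp only [bosMode, Fin.zero_eta, Fin.mk_one, Fin.reduceFinMk, Matrix.cons_val] <;>
    dsimp only [alphaMode, gammaMode, deltaMode, polyMode, derivMode, bosPair] <;>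
    simp [Fin.sum_univ_three, onPoly, Nat.cast_add_one_ne_zero] <;>
    module

theorem bosPair_comm (c : ℂ) (i j : Fin 3) : bosPair c i j = bosPair c j i := by
  fin_cases i <;> fin_cases j <;> rfl

theorem lie_polyMode_ofNat_negSucc (c : ℂ) (i j : Fin 3) (k l : ℕ) :
    ⁅polyMode c i (Int.ofNat (k + 1)), polyMode c j (Int.negSucc l)⁆
      = (if k = l then ((k + 1 : ℕ) : ℂ) * bosPair c i j else 0) • 1 := by
  rw [polyMode, polyMode, lie_derivMode_mulLeft]
  split_ifs with h
  · rw [h]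
  · rfl

theorem lie_polyMode (c : ℂ) (i j : Fin 3) (m n : ℤ) :
    ⁅polyMode c i m, polyMode c j n⁆ = (if m = -n then (m : ℂ) * bosPair c i j else 0) • 1 := by
  rcases m with (_ | k) | k <;> rcases n with (_ | l) | l
  case ofNat.succ.ofNat.succ =>
    rw [polyMode, polyMode, ← Derivation.commutator_coe_linear_map, lie_derivMode,
      if_neg (by simp only [Int.ofNat_eq_natCast]; omega), Derivation.coe_zero_linearMap, zero_smul]
  case ofNat.succ.negSucc =>
    rw [lie_polyMode_ofNat_negSucc]
    rcases eq_or_ne k l with rfl | h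
    · simp [Int.negSucc_eq]
    · simp [Int.negSucc_eq, h]
  case negSucc.ofNat.succ =>
    rw [Ring.lie_def, ← neg_sub, ← Ring.lie_def, lie_polyMode_ofNat_negSucc, bosPair_comm]
    rcases eq_or_ne l k with rfl | h
    · simp only [Int.negSucc_eq, Int.ofNat_eq_natCast, neg_add, if_true, Int.cast_add, Int.cast_neg,
        Int.cast_natCast, Int.cast_one, Nat.cast_add, Nat.cast_one]
      module
    · simp [Int.negSucc_eq, h, h.symm]
  case negSucc.negSucc =>
    rw [polyMode, polyMode, Ring.lie_def, Module.End.mul_eq_comp, Module.End.mul_eq_comp,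
      ← LinearMap.mulLeft_mul, ← LinearMap.mulLeft_mul, mul_comm, sub_self,
      if_neg (by simp only [Int.negSucc_eq]; omega), zero_smul]
  -- the remaining cases have `m = 0` or `n = 0`, where the polynomial part vanishes
  all_goals simp [polyMode, Ring.lie_def, Nat.cast_add_one_ne_zero]

theorem lie_onPoly (f g : Module.End ℂ (MvPolynomial BosVar ℂ)) :
    ⁅onPoly f, onPoly g⁆ = onPoly ⁅f, g⁆ :=
  LinearMap.lie_rTensor f g

theorem commute_onLaurent_onPoly (g : Module.End ℂ (LaurentPolynomial ℂ))
    (f : Module.End ℂ (MvPolynomial BosVar ℂ)) : Commute (onLaurent g) (onPoly f) :=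
  LinearMap.commute_lTensor_rTensor g f

theorem lie_smul_onLaurent_add_onPoly (g : Module.End ℂ (LaurentPolynomial ℂ)) (a b : ℂ)
    (f f' : Module.End ℂ (MvPolynomial BosVar ℂ)) :
    ⁅a • onLaurent g + onPoly f, b • onLaurent g + onPoly f'⁆ = onPoly ⁅f, f'⁆ := by
  rw [← lie_onPoly, Ring.lie_def, Ring.lie_def]
  simp only [add_mul, mul_add, smul_mul_assoc, mul_smul_comm,
    (commute_onLaurent_onPoly g f).eq, (commute_onLaurent_onPoly g f').eq]
  module

theorem onPoly_smul_one (a : ℂ) : onPoly (a • 1) = a • 1 := by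
  rw [onPoly, LinearMap.rTensor_smul, Module.End.one_eq_id, LinearMap.rTensor_id]
  rfl

/-- Section 3 of the paper: the displayed operators on the bosonic
Fock space `B = ℂ[x, y, t; q, q⁻¹]` represent the Heisenberg algebra of the fields
`α(z)`, `γ(z)`, `δ(z)`: `[a_{(m)}, b_{(n)}] = m·δ_{m,−n}·(a|b)·id_B`. -/
theorem bosonic_fock_heisenberg (c : ℂ) :
    ∀ (i j : Fin 3) (m n : ℤ),
      ⁅bosMode c i m, bosMode c j n⁆
        = (if m = -n then (m : ℂ) * bosPair c i j else 0) • (1 : Module.End ℂ BosFock) := by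
  intro i j m n
  rw [bosMode_eq_onLaurent_add_onPoly, bosMode_eq_onLaurent_add_onPoly,
    lie_smul_onLaurent_add_onPoly, lie_polyMode, onPoly_smul_one]
end
end
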